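/- Let d2, a2, h, q > 0 and 0 ≤ x1 < L. Define α1 = (a2 + √(a2² + 4·d2·q))/(2·d2), α2 = (a2 − √(a2² + 4·d2·q))/(2·d2), c1 = h·a2·α2 / ( q·( α2·(d2·α1 − a2)·exp(α1·x1) − α1·exp(L·(α1 − α2))·(d2·α2 − a2)·exp(α2·x1) ) ), and c2 = −(α1/α2)·exp(L·(α1 − α2))·c1. Then the function w̃(x) = c1·exp(α1·x) + c2·exp(α2·x) + h/q satisfies d2·w̃''(x) − a2·w̃'(x) + h − q·w̃(x) = 0 for all x ∈ [x1, L], together with the boundary conditions d2·w̃'(x1) − a2·w̃(x1) = 0 and w̃'(L) = 0. -/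

import Mathlib

lemma hasDeriv_combo (a b c α β x : ℝ) :
    HasDerivAt (fun x => a * Real.exp (α * x) + b * Real.exp (β * x) + c)
      (a * α * Real.exp (α * x) + b * β * Real.exp (β * x)) x := by
  have hA : HasDerivAt (fun x : ℝ => Real.exp (α * x)) (Real.exp (α * x) * α) x := by
    simpa using ((hasDerivAt_id x).const_mul α).exp
  have hB : HasDerivAt (fun x : ℝ => Real.exp (β * x)) (Real.exp (β * x) * β) x := by
    simpa using ((hasDerivAt_id x).const_mul β).exp
  have := ((hA.const_mul a).add (hB.const_mul b)).add_const c
  exact this.congr_deriv (by ring)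

lemma deriv_combo (a b c α β : ℝ) :
    deriv (fun x => a * Real.exp (α * x) + b * Real.exp (β * x) + c)
      = fun x => a * α * Real.exp (α * x) + b * β * Real.exp (β * x) := by
  funext x
  exact (hasDeriv_combo a b c α β x).deriv

lemma deriv_combo2 (a b α β : ℝ) :
    deriv (fun x => a * Real.exp (α * x) + b * Real.exp (β * x))
      = fun x => a * α * Real.exp (α * x) + b * β * Real.exp (β * x) := by
  have := deriv_combo a b 0 α β
  simpa using this

set_option maxHeartbeats 2000000 in
/-- the explicit function w̃ solves the upstream toxicant
boundary value problem on [x1, L]. -/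
theorem upstream_explicit_solution
    (d2 a2 h q x1 L : ℝ)
    (hd2 : 0 < d2) (ha2 : 0 < a2) (hh : 0 < h) (hq : 0 < q)
    (hx1 : 0 ≤ x1) (hx1L : x1 < L) :
    let α1 : ℝ := (a2 + Real.sqrt (a2 ^ 2 + 4 * d2 * q)) / (2 * d2)
    let α2 : ℝ := (a2 - Real.sqrt (a2 ^ 2 + 4 * d2 * q)) / (2 * d2)
    let c1 : ℝ := h * a2 * α2 /
      (q * (α2 * (d2 * α1 - a2) * Real.exp (α1 * x1) -
        α1 * Real.exp (L * (α1 - α2)) * (d2 * α2 - a2) * Real.exp (α2 * x1)))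
    let c2 : ℝ := -(α1 / α2) * Real.exp (L * (α1 - α2)) * c1
    let w : ℝ → ℝ := fun x => c1 * Real.exp (α1 * x) + c2 * Real.exp (α2 * x) + h / q
    (∀ x ∈ Set.Icc x1 L,
        d2 * deriv (deriv w) x - a2 * deriv w x + h - q * w x = 0) ∧
      d2 * deriv w x1 - a2 * w x1 = 0 ∧ deriv w L = 0 := by
  intro α1 α2 c1 c2 w
  have hs2 : Real.sqrt (a2 ^ 2 + 4 * d2 * q) ^ 2 = a2 ^ 2 + 4 * d2 * q :=
    Real.sq_sqrt (by positivity)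
  have hsnn : 0 ≤ Real.sqrt (a2 ^ 2 + 4 * d2 * q) := Real.sqrt_nonneg _
  have hsa : a2 < Real.sqrt (a2 ^ 2 + 4 * d2 * q) := by nlinarith
  have hα1v : α1 = (a2 + Real.sqrt (a2 ^ 2 + 4 * d2 * q)) / (2 * d2) := rfl
  have hα2v : α2 = (a2 - Real.sqrt (a2 ^ 2 + 4 * d2 * q)) / (2 * d2) := rfl
  have hα1pos : 0 < α1 := by rw [hα1v]; positivity
  have hα2neg : α2 < 0 := by
    rw [hα2v]; apply div_neg_of_neg_of_pos; linarith; positivity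
  have hα1gt : -α2 < α1 := by
    rw [hα1v, hα2v, ← neg_div, div_lt_div_iff₀ (by positivity) (by positivity)]; nlinarith
  have hroot1 : d2 * α1 ^ 2 - a2 * α1 - q = 0 := by
    rw [hα1v]; field_simp; ring_nf; ring_nf at hs2; nlinarith
  have hroot2 : d2 * α2 ^ 2 - a2 * α2 - q = 0 := by
    rw [hα2v]; field_simp; ring_nf; ring_nf at hs2; nlinarith
  have hsum1 : d2 * α1 - a2 = -(d2 * α2) := by
    rw [hα1v, hα2v]; field_simp; ring
  have hsum2 : d2 * α2 - a2 = -(d2 * α1) := by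
    rw [hα1v, hα2v]; field_simp; ring
  have hw : w = fun x => c1 * Real.exp (α1 * x) + c2 * Real.exp (α2 * x) + h / q := rfl
  have hdw : deriv w = fun x => c1 * α1 * Real.exp (α1 * x) + c2 * α2 * Real.exp (α2 * x) := by
    rw [hw, deriv_combo]
  have hddw : deriv (deriv w)
      = fun x => c1 * α1 * α1 * Real.exp (α1 * x) + c2 * α2 * α2 * Real.exp (α2 * x) := by
    rw [hdw, deriv_combo2]
  have hc1 : c1 = h * a2 * α2 /
      (q * (α2 * (d2 * α1 - a2) * Real.exp (α1 * x1) -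
        α1 * Real.exp (L * (α1 - α2)) * (d2 * α2 - a2) * Real.exp (α2 * x1))) := rfl
  have hc2 : c2 = -(α1 / α2) * Real.exp (L * (α1 - α2)) * c1 := rfl
  clear_value α1 α2 c1 c2 w
  have hwx : ∀ y, w y = c1 * Real.exp (α1 * y) + c2 * Real.exp (α2 * y) + h / q :=
    fun y => by rw [hw]
  have hdwx : ∀ y, deriv w y = c1 * α1 * Real.exp (α1 * y) + c2 * α2 * Real.exp (α2 * y) :=
    fun y => by rw [hdw]
  have hddwx : ∀ y, deriv (deriv w) y
      = c1 * α1 * α1 * Real.exp (α1 * y) + c2 * α2 * α2 * Real.exp (α2 * y) :=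
    fun y => by rw [hddw]
  -- exp inequality for D positivity
  have hEgt : Real.exp (α1 * x1) < Real.exp (L * (α1 - α2)) * Real.exp (α2 * x1) := by
    rw [← Real.exp_add]
    apply Real.exp_lt_exp.mpr
    nlinarith [mul_pos (sub_pos.mpr hx1L) (by linarith : (0:ℝ) < α1 - α2)]
  have hE1pos : 0 < Real.exp (α1 * x1) := Real.exp_pos _
  have hDpos : 0 < α2 * (d2 * α1 - a2) * Real.exp (α1 * x1) -
      α1 * Real.exp (L * (α1 - α2)) * (d2 * α2 - a2) * Real.exp (α2 * x1) := by
    rw [hsum1, hsum2]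
    have h1 : α2 * -(d2 * α2) * Real.exp (α1 * x1) = -(d2 * α2 ^ 2) * Real.exp (α1 * x1) := by ring
    have h2 : α1 * Real.exp (L * (α1 - α2)) * -(d2 * α1) * Real.exp (α2 * x1)
        = -(d2 * α1 ^ 2) * (Real.exp (L * (α1 - α2)) * Real.exp (α2 * x1)) := by ring
    rw [h1, h2]
    have hsq : α2 ^ 2 < α1 ^ 2 := by nlinarith
    have ha1 : 0 < α1 ^ 2 * (Real.exp (L * (α1 - α2)) * Real.exp (α2 * x1) - Real.exp (α1 * x1)) :=
      mul_pos (pow_pos hα1pos 2) (sub_pos.mpr hEgt)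
    have ha2' : 0 < (α1 ^ 2 - α2 ^ 2) * Real.exp (α1 * x1) :=
      mul_pos (sub_pos.mpr hsq) hE1pos
    have key : 0 < α1 ^ 2 * (Real.exp (L * (α1 - α2)) * Real.exp (α2 * x1)) -
        α2 ^ 2 * Real.exp (α1 * x1) := by nlinarith [ha1, ha2']
    nlinarith [mul_pos hd2 key]
  have hDne : α2 * (d2 * α1 - a2) * Real.exp (α1 * x1) -
      α1 * Real.exp (L * (α1 - α2)) * (d2 * α2 - a2) * Real.exp (α2 * x1) ≠ 0 := ne_of_gt hDpos
  refine ⟨?_, ?_, ?_⟩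
  · intro x _
    rw [hddwx, hdwx, hwx]
    have hqh : q * (h / q) = h := by field_simp
    linear_combination (c1 * Real.exp (α1 * x)) * hroot1 + (c2 * Real.exp (α2 * x)) * hroot2 - hqh
  · rw [hdwx, hwx]
    have hc2a : α2 * c2 = -(α1 * Real.exp (L * (α1 - α2)) * c1) := by
      rw [hc2]; field_simp [hα2neg.ne]
    have hQD : q * (α2 * (d2 * α1 - a2) * Real.exp (α1 * x1) -
        α1 * Real.exp (L * (α1 - α2)) * (d2 * α2 - a2) * Real.exp (α2 * x1)) ≠ 0 :=
      mul_ne_zero hq.ne' hDne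
    have hc1D : c1 * (q * (α2 * (d2 * α1 - a2) * Real.exp (α1 * x1) -
        α1 * Real.exp (L * (α1 - α2)) * (d2 * α2 - a2) * Real.exp (α2 * x1)))
        = h * a2 * α2 := by
      rw [hc1]; exact div_mul_cancel₀ _ hQD
    have hqh : q * (h / q) = h := by field_simp
    have hne : q * α2 ≠ 0 := mul_ne_zero hq.ne' hα2neg.ne
    apply mul_left_cancel₀ hne
    rw [mul_zero]
    linear_combination hc1D + (q * d2 * α2 * Real.exp (α2 * x1) -
      q * a2 * Real.exp (α2 * x1)) * hc2a - (α2 * a2) * hqh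
  · rw [hdwx]
    have hE : Real.exp (L * (α1 - α2)) * Real.exp (α2 * L) = Real.exp (α1 * L) := by
      rw [← Real.exp_add]; ring_nf
    have hc2a : α2 * c2 = -(α1 * Real.exp (L * (α1 - α2)) * c1) := by
      rw [hc2]; field_simp [hα2neg.ne]
    linear_combination Real.exp (α2 * L) * hc2a - (α1 * c1) * hE
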